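/- Let V ⊂ H ⊂ V* be a Gelfand triple, φ: V → ℝ convex and Gateaux differentiable, f ∈ L²(0,T;V*), u₀ ∈ V. A function u ∈ L²(0,T;V) ∩ H¹(0,T;V*) with u(0) = u₀ satisfies u_t + ∂φ(u) = f a.e. in (0,T) if and only if Φ(u) = 0, where Φ(w) = ∫₀ᵀ [φ(w) + φ*(f − w_t) + ⟨w_t − f, w⟩] dt. -/

import Mathlib

/-!
The integrand is the Fenchel–Young gap `φ(u) + φ*(g) - ⟨g, u⟩` at `g = f - u_t`, which is
nonnegative, so the integral vanishes iff the gap vanishes a.e. The gap vanishes exactly when `g` is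
a subgradient of `φ` at `u`, and for a convex Gateaux-differentiable `φ` the only subgradient is
the derivative.
-/

open MeasureTheory Filter Set

section Subgradient

variable {V : Type*} [AddCommGroup V] [Module ℝ V] [TopologicalSpace V]

def IsSubgradient (φ : V → ℝ) (x : V) (g : V →L[ℝ] ℝ) : Prop :=
  ∀ v, φ x + g (v - x) ≤ φ v

lemma ConvexOn.isSubgradient_of_hasDerivAt {φ : V → ℝ} (hφ : ConvexOn ℝ univ φ) {x : V}
    {d : V →L[ℝ] ℝ} (hd : ∀ v, HasDerivAt (fun s : ℝ => φ (x + s • v)) (d v) 0) :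
    IsSubgradient φ x d := by
  intro v
  have hline : ConvexOn ℝ univ (fun s : ℝ => φ (x + s • (v - x))) := by
    simpa [Function.comp_def, AffineMap.lineMap_apply_module', add_comm]
      using hφ.comp_affineMap (AffineMap.lineMap x v)
  have hslope := hline.le_slope_of_hasDerivAt (mem_univ 0) (mem_univ 1) one_pos (hd (v - x))
  simp only [slope_def_field, one_smul, zero_smul, add_zero, sub_zero, div_one,
    add_sub_cancel] at hslope
  linarith

lemma HasDerivAt.eq_of_forall_add_mul_le {ψ : ℝ → ℝ} {a d c : ℝ} (hψ : HasDerivAt ψ d a)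
    (hle : ∀ s, ψ a + (s - a) * c ≤ ψ s) : d = c := by
  have hmin : IsLocalMin (fun s => ψ s - (s - a) * c) a :=
    Eventually.of_forall fun s => by simp only [sub_self, zero_mul, sub_zero]; linarith [hle s]
  have hcrit := hmin.hasDerivAt_eq_zero (hψ.sub (((hasDerivAt_id' a).sub_const a).mul_const c))
  linarith

lemma IsSubgradient.eq_of_hasDerivAt {φ : V → ℝ} {x : V} {g d : V →L[ℝ] ℝ}
    (hg : IsSubgradient φ x g) (hd : ∀ v, HasDerivAt (fun s : ℝ => φ (x + s • v)) (d v) 0) :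
    g = d := by
  ext v
  refine ((hd v).eq_of_forall_add_mul_le fun s => ?_).symm
  simpa [mul_comm s] using hg (x + s • v)

lemma isSubgradient_iff_isGreatest {φ : V → ℝ} {x : V} {g : V →L[ℝ] ℝ} :
    IsSubgradient φ x g ↔ IsGreatest (range fun v => g v - φ v) (g x - φ x) := by
  simp only [IsSubgradient, IsGreatest, mem_range_self, true_and, mem_upperBounds,
    forall_mem_range, map_sub]
  exact forall_congr' fun v => by constructor <;> intro h <;> linarith

lemma fenchelYoung_gap_nonneg {φ : V → ℝ} {g : V →L[ℝ] ℝ} {s : ℝ}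
    (hs : IsLUB (range fun v => g v - φ v) s) (x : V) :
    0 ≤ φ x + s - g x := by
  linarith [hs.1 (mem_range_self x)]

lemma fenchelYoung_gap_eq_zero_iff_isSubgradient {φ : V → ℝ} {g : V →L[ℝ] ℝ} {s : ℝ}
    (hs : IsLUB (range fun v => g v - φ v) s) (x : V) :
    φ x + s - g x = 0 ↔ IsSubgradient φ x g := by
  rw [isSubgradient_iff_isGreatest]
  constructor
  · intro h
    obtain rfl : s = g x - φ x := by linarith
    exact ⟨mem_range_self x, hs.1⟩
  · intro h
    linarith [hs.unique h.isLUB]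

lemma ConvexOn.fenchelYoung_gap_eq_zero_iff {φ : V → ℝ} (hφ : ConvexOn ℝ univ φ)
    {g d : V →L[ℝ] ℝ} {s : ℝ} {x : V}
    (hd : ∀ v, HasDerivAt (fun s : ℝ => φ (x + s • v)) (d v) 0)
    (hs : IsLUB (range fun v => g v - φ v) s) :
    φ x + s - g x = 0 ↔ g = d := by
  rw [fenchelYoung_gap_eq_zero_iff_isSubgradient hs]
  exact ⟨fun hg => hg.eq_of_hasDerivAt hd, fun hg => hg ▸ hφ.isSubgradient_of_hasDerivAt hd⟩

end Subgradient

lemma intervalIntegral.integral_eq_zero_iff_of_le_of_nonneg_ae_Ioo {μ : Measure ℝ}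
    [NullSingletonClass μ] {F : ℝ → ℝ} {a b : ℝ} (hab : a ≤ b)
    (hF : 0 ≤ᵐ[μ.restrict (Ioo a b)] F)
    (hFi : IntervalIntegrable F μ a b) :
    ∫ t in a..b, F t ∂μ = 0 ↔ ∀ᵐ t ∂μ.restrict (Ioo a b), F t = 0 := by
  rw [Measure.restrict_congr_set Ioo_ae_eq_Ioc] at hF ⊢
  exact integral_eq_zero_iff_of_le_of_nonneg_ae hab hF hFi

theorem brezis_ekeland_principle_general {V : Type*}
    [NormedAddCommGroup V] [NormedSpace ℝ V]
    (T : ℝ) (hT : 0 < T)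
    (φ : V → ℝ) (hconv : ConvexOn ℝ Set.univ φ)
    (dφ : V → V →L[ℝ] ℝ)
    (hGateaux : ∀ x v : V, HasDerivAt (fun s : ℝ => φ (x + s • v)) (dφ x v) 0)
    (φstar : (V →L[ℝ] ℝ) → ℝ)
    (hstar : ∀ g : V →L[ℝ] ℝ, IsLUB (Set.range fun v => g v - φ v) (φstar g))
    (f : ℝ → V →L[ℝ] ℝ) (u : ℝ → V) (ut : ℝ → V →L[ℝ] ℝ)
    (hint : IntervalIntegrable
      (fun t => φ (u t) + φstar (f t - ut t) + (ut t - f t) (u t))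
      MeasureTheory.volume 0 T) :
    (∀ᵐ t ∂(MeasureTheory.volume.restrict (Set.Ioo (0 : ℝ) T)),
        ut t + dφ (u t) = f t) ↔
      (∫ t in (0 : ℝ)..T,
        (φ (u t) + φstar (f t - ut t) + (ut t - f t) (u t))) = 0 := by
  have hgap : ∀ t, φ (u t) + φstar (f t - ut t) + (ut t - f t) (u t) =
      φ (u t) + φstar (f t - ut t) - (f t - ut t) (u t) := fun t => by
    simp only [sub_apply]
    ring
  simp only [hgap] at hint ⊢
  rw [intervalIntegral.integral_eq_zero_iff_of_le_of_nonneg_ae_Ioo hT.le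
    (ae_of_all _ fun t => fenchelYoung_gap_nonneg (hstar _) (u t)) hint]
  refine eventually_congr (ae_of_all _ fun t => ?_)
  rw [hconv.fenchelYoung_gap_eq_zero_iff (hGateaux (u t)) (hstar _), sub_eq_iff_eq_add', eq_comm]

/-- The Brezis–Ekeland principle. In a Gelfand triple `V ⊂ H ⊂ V*`
(modeled by a dense injective embedding `ι : V → H` into a Hilbert space
and the induced map `j : V → V*`), with `φ : V → ℝ` convex and Gateaux
differentiable with derivative `dφ`, Fenchel conjugate `φ*`,
`f ∈ L²(0,T;V*)`, `u₀ ∈ V`: a function `u ∈ L²(0,T;V) ∩ H¹(0,T;V*)` with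
`u(0) = u₀` satisfies `u_t + ∂φ(u) = f` a.e. in `(0,T)` if and only if
`Φ(u) = ∫₀ᵀ [φ(u) + φ*(f − u_t) + ⟨u_t − f, u⟩] dt = 0`. -/
theorem brezis_ekeland_principle {V H : Type*}
    [NormedAddCommGroup V] [NormedSpace ℝ V] [CompleteSpace V]
    [NormedAddCommGroup H] [InnerProductSpace ℝ H] [CompleteSpace H]
    (ι : V →L[ℝ] H) (hι : Function.Injective ι) (hdense : DenseRange ι)
    (j : V →L[ℝ] V →L[ℝ] ℝ) (hj : ∀ v x : V, j v x = (inner ℝ (ι v) (ι x) : ℝ))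
    (T : ℝ) (hT : 0 < T)
    (φ : V → ℝ) (hconv : ConvexOn ℝ Set.univ φ)
    (dφ : V → V →L[ℝ] ℝ)
    (hGateaux : ∀ x v : V, HasDerivAt (fun s : ℝ => φ (x + s • v)) (dφ x v) 0)
    (φstar : (V →L[ℝ] ℝ) → ℝ)
    (hstar : ∀ g : V →L[ℝ] ℝ, IsLUB (Set.range fun v => g v - φ v) (φstar g))
    (f : ℝ → V →L[ℝ] ℝ) (u0 : V) (u : ℝ → V) (ut : ℝ → V →L[ℝ] ℝ)
    (hu0 : u 0 = u0)
    (hderiv : ∀ t ∈ Set.Ioo (0 : ℝ) T, HasDerivAt (fun s => j (u s)) (ut t) t)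
    (hint : IntervalIntegrable
      (fun t => φ (u t) + φstar (f t - ut t) + (ut t - f t) (u t))
      MeasureTheory.volume 0 T) :
    (∀ᵐ t ∂(MeasureTheory.volume.restrict (Set.Ioo (0 : ℝ) T)),
        ut t + dφ (u t) = f t) ↔
      (∫ t in (0 : ℝ)..T,
        (φ (u t) + φstar (f t - ut t) + (ut t - f t) (u t))) = 0 :=
  brezis_ekeland_principle_general T hT φ hconv dφ hGateaux φstar hstar f u ut hint
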